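/- For every x ∈ Q, writing x = v + w with v ∈ V and w ∈ V^⊥, the following inclusion holds: {y ∈ V : y^{(1)} ∈ V_1^+ and ‖y^{(2)} − v^{(2)}‖ ≤ d(x)} ⊆ (Q − w) ∩ V. -/

import Mathlib

/-! The inclusion is checked coordinatewise. For `i ∈ I` the `V^⊥`- and `V₂`-parts vanish, so
`(y + w)_i = y⁽¹⁾_i ≥ 0`; for `i ∈ I^⊥` the `V`-parts vanish, so `(y + w)_i = x_i ≥ 0`; otherwise the
`V₁`-parts vanish and `(y + w)_i = x_i + (y⁽²⁾ - v⁽²⁾)_i ≥ x_i - d(x) ≥ 0`. -/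

open MeasureTheory Filter
open scoped RealInnerProductSpace

noncomputable section

/-- The positive orthant `Q` of `ℝ^d`. -/
def Qpos (d : ℕ) : Set (EuclideanSpace ℝ (Fin d)) := {x | ∀ i, 0 ≤ x i}

/-- An `r`-tuple `(u 0, …, u (r-1))` of vectors of the orthant is *admissible* if the vectors
are linearly independent, `μ(u_1^-) = 1`, and
`μ(u_k^- ∩ u_{k-1}^⊥ ∩ ⋯ ∩ u_1^⊥) = μ(u_{k-1}^⊥ ∩ ⋯ ∩ u_1^⊥)` for `k = 2, …, r`
(the case `k = 1` of the displayed condition reads `μ(u_1^-) = μ(ℝ^d) = 1`). -/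
def Admissible {d : ℕ} (μ : Measure (EuclideanSpace ℝ (Fin d))) {r : ℕ}
    (u : Fin r → EuclideanSpace ℝ (Fin d)) : Prop :=
  (∀ k, u k ∈ Qpos d) ∧ LinearIndependent ℝ u ∧
    ∀ k : Fin r,
      μ ({x | ⟪x, u k⟫ ≤ 0} ∩ {x | ∀ j, j < k → ⟪x, u j⟫ = 0}) =
        μ {x | ∀ j, j < k → ⟪x, u j⟫ = 0}

/-- An admissible tuple is *maximal* if no vector `v ∈ Q` can be appended to it so that the
resulting tuple is still admissible. -/
def MaximalAdmissible {d : ℕ} (μ : Measure (EuclideanSpace ℝ (Fin d))) {r : ℕ}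
    (u : Fin r → EuclideanSpace ℝ (Fin d)) : Prop :=
  Admissible μ u ∧ ∀ v ∈ Qpos d, ¬ Admissible μ (Fin.snoc u v)

/-- The Laplace transform `L_μ(z) = ∫ exp⟨z,y⟫ dμ(y)`. -/
def laplace {d : ℕ} (μ : Measure (EuclideanSpace ℝ (Fin d)))
    (z : EuclideanSpace ℝ (Fin d)) : ℝ :=
  ∫ y, Real.exp ⟪z, y⟫ ∂μ

/-- The reduced support `V = span{u_1,…,u_r}^⊥` associated with a (maximal admissible) tuple. -/
def Vred {d : ℕ} {r : ℕ} (u : Fin r → EuclideanSpace ℝ (Fin d)) :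
    Submodule ℝ (EuclideanSpace ℝ (Fin d)) :=
  (Submodule.span ℝ (Set.range u))ᗮ

/-- The cone `V^+ = V ∩ ⋃_{h ∈ V^⊥} (Q − h)`. -/
def Vplus {d : ℕ} {r : ℕ} (u : Fin r → EuclideanSpace ℝ (Fin d)) :
    Set (EuclideanSpace ℝ (Fin d)) :=
  {v | v ∈ Vred u ∧ ∃ h ∈ (Vred u)ᗮ, v + h ∈ Qpos d}

/-- The subspace `V₁ = span{e_i : i ∈ I}` where `I = {i : e_i ∈ V}`. -/
def Vone {d : ℕ} {r : ℕ} (u : Fin r → EuclideanSpace ℝ (Fin d)) :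
    Submodule ℝ (EuclideanSpace ℝ (Fin d)) :=
  Submodule.span ℝ
    ((fun i => EuclideanSpace.single i (1 : ℝ)) ''
      {i : Fin d | EuclideanSpace.single i (1 : ℝ) ∈ Vred u})

/-- `V₂`, the orthogonal complement of `V₁` inside `V`. -/
def Vtwo {d : ℕ} {r : ℕ} (u : Fin r → EuclideanSpace ℝ (Fin d)) :
    Submodule ℝ (EuclideanSpace ℝ (Fin d)) :=
  Vred u ⊓ (Vone u)ᗮ

namespace EuclideanSpace

variable {ι : Type*} [DecidableEq ι]

theorem inner_single_one_right [Fintype ι] (z : EuclideanSpace ℝ ι) (i : ι) :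
    ⟪z, single i (1 : ℝ)⟫ = z i := by
  simp [inner_single_right]

theorem apply_eq_zero_of_single_mem_of_mem_orthogonal [Fintype ι]
    {K : Submodule ℝ (EuclideanSpace ℝ ι)} {z : EuclideanSpace ℝ ι} {i : ι} (hi : single i (1 : ℝ) ∈ K) (hz : z ∈ Kᗮ) : z i = 0 := by
  rw [← inner_single_one_right]
  exact Submodule.inner_left_of_mem_orthogonal hi hz

theorem apply_eq_zero_of_mem_span_single {S : Set ι} {z : EuclideanSpace ℝ ι}
    (hz : z ∈ Submodule.span ℝ ((fun j => single j (1 : ℝ)) '' S)) {i : ι} (hi : i ∉ S) :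
    z i = 0 := by
  have hle : Submodule.span ℝ ((fun j => single j (1 : ℝ)) '' S) ≤
      LinearMap.ker (proj (𝕜 := ℝ) i).toLinearMap := by
    refine Submodule.span_le.2 ?_
    rintro _ ⟨j, hj, rfl⟩
    simp [show i ≠ j by rintro rfl; exact hi hj]
  exact hle hz

end EuclideanSpace

open EuclideanSpace

theorem Vone_le_Vred {d r : ℕ} (u : Fin r → EuclideanSpace ℝ (Fin d)) : Vone u ≤ Vred u := by
  refine Submodule.span_le.2 ?_
  rintro _ ⟨i, hi, rfl⟩
  exact hi

/-- `D` stands for `d(x)`: any `D ≤ x i` for all `i ∉ I ∪ I^⊥`. -/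
theorem stmt7_general (d : ℕ)
    {r : ℕ} (u : Fin r → EuclideanSpace ℝ (Fin d))
    (x v w : EuclideanSpace ℝ (Fin d)) (hx : x ∈ Qpos d)
    (hv : v ∈ Vred u) (hw : w ∈ (Vred u)ᗮ) (hvw : x = v + w)
    (v₁ v₂ : EuclideanSpace ℝ (Fin d)) (hv₁ : v₁ ∈ Vone u)
    (hv₁₂ : v = v₁ + v₂)
    (D : ℝ)
    (hD : ∀ i : Fin d, EuclideanSpace.single i (1 : ℝ) ∉ Vred u →
      EuclideanSpace.single i (1 : ℝ) ∉ (Vred u)ᗮ → D ≤ x i) :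
    ∀ y y₁ y₂ : EuclideanSpace ℝ (Fin d), y₁ ∈ Vone u → y₂ ∈ Vtwo u → y = y₁ + y₂ →
      (∀ i : Fin d, EuclideanSpace.single i (1 : ℝ) ∈ Vred u →
        0 ≤ ⟪y₁, EuclideanSpace.single i (1 : ℝ)⟫) →
      ‖y₂ - v₂‖ ≤ D →
      y + w ∈ Qpos d ∧ y ∈ Vred u := by
  intro y y₁ y₂ hy₁ hy₂ hy hpos hnorm
  have hyV : y ∈ Vred u := hy ▸ (Vred u).add_mem (Vone_le_Vred u hy₁) hy₂.1
  refine ⟨fun i => ?_, hyV⟩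
  have hxi : x i = v₁ i + v₂ i + w i := by simp [hvw, hv₁₂]
  have hyi : (y + w) i = y₁ i + y₂ i + w i := by simp [hy]
  by_cases hiV : single i (1 : ℝ) ∈ Vred u
  · have hw0 : w i = 0 := apply_eq_zero_of_single_mem_of_mem_orthogonal hiV hw
    have hiV₁ : single i (1 : ℝ) ∈ Vone u := Submodule.subset_span ⟨i, hiV, rfl⟩
    have hy₂0 : y₂ i = 0 := apply_eq_zero_of_single_mem_of_mem_orthogonal hiV₁ hy₂.2
    have hy₁0 : 0 ≤ y₁ i := inner_single_one_right y₁ i ▸ hpos i hiV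
    linarith
  by_cases hiV' : single i (1 : ℝ) ∈ (Vred u)ᗮ
  · have hy0 : y i = 0 := apply_eq_zero_of_single_mem_of_mem_orthogonal hiV'
      (Submodule.le_orthogonal_orthogonal _ hyV)
    have hv0 : v i = 0 := apply_eq_zero_of_single_mem_of_mem_orthogonal hiV'
      (Submodule.le_orthogonal_orthogonal _ hv)
    have hxi' : x i = v i + w i := by simp [hvw]
    simpa [hy0, hv0, hxi'] using hx i
  · have hy₁0 : y₁ i = 0 := apply_eq_zero_of_mem_span_single hy₁ hiV
    have hv₁0 : v₁ i = 0 := apply_eq_zero_of_mem_span_single hv₁ hiV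
    have hclose : |y₂ i - v₂ i| ≤ D :=
      (PiLp.norm_apply_le (y₂ - v₂) i).trans hnorm
    linarith [(abs_le.1 hclose).1, hD i hiV hiV']

/-- For `x = v + w ∈ Q` (`v ∈ V`, `w ∈ V^⊥`),
`{y ∈ V : y⁽¹⁾ ∈ V₁^+ and ‖y⁽²⁾ − v⁽²⁾‖ ≤ d(x)} ⊆ (Q − w) ∩ V`.  The quantity `d(x)`
is encoded by a real number `D` with `D ≤ x i` for all `i ∉ I ∪ I^⊥` (which is exactly
`D ≤ d(x)`, every such `D` — in particular the minimum itself — being covered; when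
`I ∪ I^⊥ = {1,…,d}`, i.e. `d(x) = ∞`, the bound `D` is arbitrary). -/
theorem stmt7 (d : ℕ) (hd : 1 ≤ d)
    (μ : Measure (EuclideanSpace ℝ (Fin d))) [IsProbabilityMeasure μ]
    {r : ℕ} (hr : 1 ≤ r) (u : Fin r → EuclideanSpace ℝ (Fin d))
    (hu : MaximalAdmissible μ u)
    (x v w : EuclideanSpace ℝ (Fin d)) (hx : x ∈ Qpos d)
    (hv : v ∈ Vred u) (hw : w ∈ (Vred u)ᗮ) (hvw : x = v + w)
    (v₁ v₂ : EuclideanSpace ℝ (Fin d)) (hv₁ : v₁ ∈ Vone u) (hv₂ : v₂ ∈ Vtwo u)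
    (hv₁₂ : v = v₁ + v₂)
    (D : ℝ)
    (hD : ∀ i : Fin d, EuclideanSpace.single i (1 : ℝ) ∉ Vred u →
      EuclideanSpace.single i (1 : ℝ) ∉ (Vred u)ᗮ → D ≤ x i) :
    ∀ y y₁ y₂ : EuclideanSpace ℝ (Fin d), y₁ ∈ Vone u → y₂ ∈ Vtwo u → y = y₁ + y₂ →
      (∀ i : Fin d, EuclideanSpace.single i (1 : ℝ) ∈ Vred u →
        0 ≤ ⟪y₁, EuclideanSpace.single i (1 : ℝ)⟫) →
      ‖y₂ - v₂‖ ≤ D →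
      y + w ∈ Qpos d ∧ y ∈ Vred u :=
  stmt7_general d u x v w hx hv hw hvw v₁ v₂ hv₁ hv₁₂ D hD
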